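/- Fix integers k, ℓ with 1 < k < ℓ − 2, where k and ℓ divide n. Every planar graph containing C_{n,1}, C_{n,k}, and C_{n,ℓ} as subgraphs has at least (3/2 − 1/k − k/ℓ)·n − (k−1)(ℓ−k) − ℓ/2 vertices. -/

import Mathlib

open SimpleGraph

def HasMinor {V W : Type*} (G : SimpleGraph V) (H : SimpleGraph W) : Prop :=
  ∃ f : W → Set V,
    (∀ w, (f w).Nonempty) ∧
    (∀ w, (G.induce (f w)).Connected) ∧
    (Pairwise fun w₁ w₂ => Disjoint (f w₁) (f w₂)) ∧
    ∀ ⦃w₁ w₂⦄, H.Adj w₁ w₂ → ∃ a ∈ f w₁, ∃ b ∈ f w₂, G.Adj a b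

def IsPlanar {V : Type*} (G : SimpleGraph V) : Prop :=
  ¬ HasMinor G (completeGraph (Fin 5)) ∧
  ¬ HasMinor G (completeBipartiteGraph (Fin 3) (Fin 3))

def IsOuterplanar {V : Type*} (G : SimpleGraph V) : Prop :=
  ¬ HasMinor G (completeGraph (Fin 4)) ∧
  ¬ HasMinor G (completeBipartiteGraph (Fin 2) (Fin 3))

def Contains {V W : Type*} (G : SimpleGraph V) (H : SimpleGraph W) : Prop :=
  ∃ f : W ↪ V, ∀ ⦃a b⦄, H.Adj a b → G.Adj (f a) (f b)

/-- The caterpillar with spine a path on `k` vertices, each spine vertex having `m` leaves. -/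
def caterpillar (k m : ℕ) : SimpleGraph (Fin k ⊕ Fin k × Fin m) :=
  SimpleGraph.fromRel (fun a b =>
    match a, b with
    | Sum.inl i, Sum.inl j => (i : ℕ) + 1 = (j : ℕ)
    | Sum.inl i, Sum.inr p => i = p.1
    | _, _ => False)

/-!
The spine vertices of the three caterpillars form a set `H` of at most `1 + k + ℓ` hubs. Even if
the spines overlap, the hub degrees sum to at least
`(n - 1) + (k - 1)(n/k - 1) + (ℓ - k - 1)(n/ℓ - 1)`. Counting the same edges from the other end:
without a `K_{3,3}` minor three hubs have at most two common neighbours, so a vertex seeing `d`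
hubs contributes `d ≤ 2 + C(d, 3)` and the `C(d, 3)` terms add up to at most `2·C(|H|, 3)`.
Hence the degree sum is at most `2|V| + 2·C(1 + k + ℓ, 3)`, and once `n/k ≥ 2·C(1 + k + ℓ, 3)`
this constant is absorbed by the slack `n/(2k)` in the claimed bound.
-/

open Finset

variable {V : Type*}

theorem Contains.hasMinor {W : Type*} {G : SimpleGraph V} {H : SimpleGraph W} (h : Contains G H) :
    HasMinor G H := by
  obtain ⟨f, hf⟩ := h
  refine ⟨fun w => {f w}, fun w => Set.singleton_nonempty _, fun w => ?_, ?_, ?_⟩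
  · rw [induce_singleton_eq_top]
    exact connected_top
  · exact fun w₁ w₂ hw => Set.disjoint_singleton.2 (f.injective.ne hw)
  · exact fun w₁ w₂ hw => ⟨_, rfl, _, rfl, hf hw⟩

theorem contains_completeBipartiteGraph {α β : Type*} {G : SimpleGraph V} (a : α ↪ V) (b : β ↪ V)
    (hab : ∀ i j, G.Adj (a i) (b j)) : Contains G (completeBipartiteGraph α β) := by
  refine ⟨⟨Sum.elim a b, a.injective.sumElim b.injective fun i j => (hab i j).ne⟩, ?_⟩
  rintro (i | j) (i' | j') hadj <;> simp_all [(hab _ _).symm]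

theorem card_commonNeighbors_le_two [Fintype V] {G : SimpleGraph V}
    [DecidableRel G.Adj] (hG : ¬HasMinor G (completeBipartiteGraph (Fin 3) (Fin 3)))
    {s : Finset V} (hs : #s = 3) : #{u | ∀ v ∈ s, G.Adj v u} ≤ 2 := by
  by_contra! h
  obtain ⟨t, hts, ht⟩ := exists_subset_card_eq h
  let emb {r : Finset V} (hr : #r = 3) : Fin 3 ↪ V :=
    (equivFinOfCardEq hr).symm.toEmbedding.trans (Function.Embedding.subtype _)
  refine hG (contains_completeBipartiteGraph (emb hs) (emb ht) fun i j => ?_).hasMinor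
  exact (mem_filter.1 (hts ((equivFinOfCardEq ht).symm j).2)).2 _ ((equivFinOfCardEq hs).symm i).2

theorem Nat.le_two_add_choose_three : ∀ n : ℕ, n ≤ 2 + n.choose 3
  | 0 | 1 | 2 => by decide
  | n + 3 => by
    have := Nat.le_two_add_choose_three (n + 2)
    have : 1 ≤ (n + 2).choose 2 := Nat.choose_pos (by omega)
    rw [show (n + 3).choose 3 = (n + 2).choose 2 + (n + 2).choose 3 from
      Nat.choose_succ_succ (n + 2) 2]
    omega

theorem sum_degree_le_of_not_hasMinor [Fintype V] {G : SimpleGraph V}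
    [DecidableRel G.Adj] (hG : ¬HasMinor G (completeBipartiteGraph (Fin 3) (Fin 3)))
    (H : Finset V) : ∑ v ∈ H, G.degree v ≤ 2 * Fintype.card V + 2 * (#H).choose 3 := by
  have h_nbrs (u : V) :
      #{v ∈ H | G.Adj v u} ≤ 2 + #{s ∈ H.powersetCard 3 | ∀ v ∈ s, G.Adj v u} := by
    refine (Nat.le_two_add_choose_three _).trans (Nat.add_le_add_left ?_ 2)
    rw [← card_powersetCard]
    refine card_le_card fun s hs => ?_
    obtain ⟨hsH, hs3⟩ := mem_powersetCard.1 hs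
    exact mem_filter.2 ⟨mem_powersetCard.2 ⟨hsH.trans (filter_subset _ _), hs3⟩,
      fun v hv => (mem_filter.1 (hsH hv)).2⟩
  calc ∑ v ∈ H, G.degree v = ∑ u, #{v ∈ H | G.Adj v u} := by
        simp only [← card_neighborFinset_eq_degree, neighborFinset_eq_filter]
        exact sum_card_bipartiteAbove_eq_sum_card_bipartiteBelow _
    _ ≤ ∑ u, (2 + #{s ∈ H.powersetCard 3 | ∀ v ∈ s, G.Adj v u}) :=
        sum_le_sum fun u _ => h_nbrs u
    _ = 2 * Fintype.card V + ∑ s ∈ H.powersetCard 3, #{u | ∀ v ∈ s, G.Adj v u} := by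
        rw [sum_add_distrib, sum_const, card_univ, smul_eq_mul, mul_comm]
        congr 1
        exact sum_card_bipartiteAbove_eq_sum_card_bipartiteBelow fun u s => ∀ v ∈ s, G.Adj v u
    _ ≤ 2 * Fintype.card V + 2 * (#H).choose 3 := by
        grw [sum_le_card_nsmul _ _ 2 fun s hs =>
          card_commonNeighbors_le_two hG (mem_powersetCard.1 hs).2]
        rw [card_powersetCard, smul_eq_mul, mul_comm ((#H).choose 3)]

theorem exists_spine_of_contains_caterpillar [Fintype V] {G : SimpleGraph V} [DecidableRel G.Adj]
    {k m : ℕ} (h : Contains G (caterpillar k m)) :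
    ∃ S : Finset V, #S = k ∧ ∀ v ∈ S, m ≤ G.degree v := by
  obtain ⟨f, hf⟩ := h
  refine ⟨univ.map (Function.Embedding.inl.trans f), by simp, ?_⟩
  simp only [mem_map, mem_univ, true_and, Function.Embedding.trans_apply,
    Function.Embedding.inl_apply, forall_exists_index]
  rintro _ i rfl
  have h_leaf (j : Fin m) : f (Sum.inr (i, j)) ∈ G.neighborFinset (f (Sum.inl i)) := by
    rw [mem_neighborFinset]
    exact hf (by simp [caterpillar])
  simpa using card_le_card_of_injOn (s := univ) _ (fun j _ => h_leaf j)
    (fun j _ j' _ hj => by simpa using f.injective hj)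

theorem Finset.sum_add_le_sum_union {α : Type*} [DecidableEq α] {s t : Finset α} {f : α → ℕ}
    {y : ℕ} (h : ∀ a ∈ t, y ≤ f a) : ∑ a ∈ s, f a + (#t - #s) * y ≤ ∑ a ∈ s ∪ t, f a := by
  rw [← union_sdiff_self_eq_union, sum_union disjoint_sdiff]
  gcongr
  calc (#t - #s) * y ≤ #(t \ s) * y := by gcongr; exact le_card_sdiff s t
    _ ≤ ∑ a ∈ t \ s, f a := by
      simpa using card_nsmul_le_sum (t \ s) f y fun a ha => h a (mem_sdiff.1 ha).1

theorem Finset.le_sum_union_union {α : Type*} [DecidableEq α] {s₁ s₂ s₃ : Finset α}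
    {f : α → ℕ} {x y z : ℕ} (h₁ : ∀ a ∈ s₁, x ≤ f a) (h₂ : ∀ a ∈ s₂, y ≤ f a)
    (h₃ : ∀ a ∈ s₃, z ≤ f a) :
    #s₁ * x + (#s₂ - #s₁) * y + (#s₃ - (#s₁ + #s₂)) * z ≤ ∑ a ∈ s₁ ∪ s₂ ∪ s₃, f a :=
  calc #s₁ * x + (#s₂ - #s₁) * y + (#s₃ - (#s₁ + #s₂)) * z
      ≤ ∑ a ∈ s₁, f a + (#s₂ - #s₁) * y + (#s₃ - #(s₁ ∪ s₂)) * z := by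
        gcongr
        · simpa using card_nsmul_le_sum s₁ f x h₁
        · exact card_union_le s₁ s₂
    _ ≤ ∑ a ∈ s₁ ∪ s₂, f a + (#s₃ - #(s₁ ∪ s₂)) * z := by grw [sum_add_le_sum_union h₂]
    _ ≤ ∑ a ∈ s₁ ∪ s₂ ∪ s₃, f a := sum_add_le_sum_union h₃

theorem three_caterpillars_arith {k ℓ n v D : ℕ} (hk : 1 ≤ k) (hkl : k < ℓ) (hkn : k ∣ n)
    (hln : ℓ ∣ n) (hn : k * D + ℓ ≤ n)
    (h : n - 1 + (k - 1) * (n / k - 1) + (ℓ - (1 + k)) * (n / ℓ - 1) ≤ 2 * v + D) :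
    (3 / 2 - 1 / (k : ℝ) - (k : ℝ) / (ℓ : ℝ)) * (n : ℝ) - ((k : ℝ) - 1) * ((ℓ : ℝ) - (k : ℝ))
      - (ℓ : ℝ) / 2 ≤ (v : ℝ) := by
  have hD : D ≤ n / k := (Nat.le_div_iff_mul_le (by omega)).2 (by linarith)
  have ha : 1 ≤ n / k := (Nat.one_le_div_iff (by omega)).2 (by omega)
  have hb : 1 ≤ n / ℓ := (Nat.one_le_div_iff (by omega)).2 (by omega)
  have hR := (Nat.cast_le (α := ℝ)).2 h
  push_cast [Nat.cast_sub (by omega : 1 ≤ n), Nat.cast_sub ha, Nat.cast_sub hb,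
    Nat.cast_sub hk, Nat.cast_sub (by omega : 1 + k ≤ ℓ)] at hR
  have hna : (n : ℝ) = k * (n / k : ℕ) := by exact_mod_cast (Nat.mul_div_cancel' hkn).symm
  have hnb : (n : ℝ) = ℓ * (n / ℓ : ℕ) := by exact_mod_cast (Nat.mul_div_cancel' hln).symm
  have hcoef : (3 / 2 - 1 / (k : ℝ) - k / ℓ) * n = 3 / 2 * n - n / k - k * (n / ℓ) := by ring
  rw [hcoef, ← Nat.cast_div hkn (Nat.cast_ne_zero.2 (by omega)),
    ← Nat.cast_div hln (Nat.cast_ne_zero.2 (by omega))]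
  have hk1 : (1 : ℝ) ≤ k := by exact_mod_cast hk
  have hkl' : (k : ℝ) ≤ ℓ := by exact_mod_cast hkl.le
  have hDR : (D : ℝ) ≤ (n / k : ℕ) := by exact_mod_cast hD
  linarith [mul_nonneg (sub_nonneg.2 hk1) (Nat.cast_nonneg (α := ℝ) (n / ℓ)),
    mul_nonneg (sub_nonneg.2 hk1) (sub_nonneg.2 hkl')]

/-- Fix `1 < k < ℓ − 2`.  For all sufficiently large `n` divisible by `k` and `ℓ`, every
planar graph containing the caterpillars `C_{n,1}`, `C_{n,k}` and `C_{n,ℓ}` as subgraphs has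
at least `(3/2 − 1/k − k/ℓ)·n − (k−1)(ℓ−k) − ℓ/2` vertices. -/
theorem three_caterpillars_lower_bound (k ℓ : ℕ) (hk : 1 < k) (hkl : k + 2 < ℓ) :
    ∃ N : ℕ, ∀ n, N ≤ n → k ∣ n → ℓ ∣ n →
      ∀ (V : Type) [Fintype V] (G : SimpleGraph V), IsPlanar G →
        Contains G (caterpillar 1 (n - 1)) →
        Contains G (caterpillar k (n / k - 1)) →
        Contains G (caterpillar ℓ (n / ℓ - 1)) →
        (3 / 2 - 1 / (k : ℝ) - (k : ℝ) / (ℓ : ℝ)) * (n : ℝ)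
            - ((k : ℝ) - 1) * ((ℓ : ℝ) - (k : ℝ)) - (ℓ : ℝ) / 2
          ≤ (Fintype.card V : ℝ) := by
  classical
  refine ⟨k * (2 * (1 + k + ℓ).choose 3) + ℓ, fun n hn hkn hln V _ G hG h₁ h₂ h₃ => ?_⟩
  obtain ⟨S₁, hS₁, hdeg₁⟩ := exists_spine_of_contains_caterpillar h₁
  obtain ⟨S₂, hS₂, hdeg₂⟩ := exists_spine_of_contains_caterpillar h₂
  obtain ⟨S₃, hS₃, hdeg₃⟩ := exists_spine_of_contains_caterpillar h₃
  have hcard : #(S₁ ∪ S₂ ∪ S₃) ≤ 1 + k + ℓ := by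
    grw [card_union_le, card_union_le, hS₁, hS₂, hS₃]
  refine three_caterpillars_arith hk.le (by omega) hkn hln hn ?_
  calc n - 1 + (k - 1) * (n / k - 1) + (ℓ - (1 + k)) * (n / ℓ - 1)
      ≤ ∑ v ∈ S₁ ∪ S₂ ∪ S₃, G.degree v := by
        simpa [hS₁, hS₂, hS₃] using le_sum_union_union hdeg₁ hdeg₂ hdeg₃
    _ ≤ 2 * Fintype.card V + 2 * (#(S₁ ∪ S₂ ∪ S₃)).choose 3 :=
        sum_degree_le_of_not_hasMinor hG.2 _
    _ ≤ 2 * Fintype.card V + 2 * (1 + k + ℓ).choose 3 := by grw [hcard]
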